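/- Fix ℓ ∈ [0,1) and define F_ℓ(x) = 4x(1−x)(1−ℓx) / (1−ℓx²)². If x₁, x₂, …, x_p ∈ [0,1] is a period-p orbit of F_ℓ (i.e., F_ℓ(x_n) = x_{n+1} for 1 ≤ n ≤ p−1 and F_ℓ(x_p) = x₁) with x_n(1−x_n)(1−ℓx_n) ≠ 0 for every n, then the multiplier λ = ∏_{n=1}^p F_ℓ'(x_n) satisfies λ² = 4^p, i.e., |λ| = 2^p. -/

import Mathlib

/-!
With `H(x) = x(1-x)(1-ℓx)` and `D(x) = 1 - ℓx²`, both `1 - F_ℓ` and `1 - ℓF_ℓ` are perfect squares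
over `D²`, namely `(1 - 2x + ℓx²)² / D²` and `(1 - 2ℓx + ℓx²)² / D²`, while
`F_ℓ' = 4(1 - 2x + ℓx²)(1 - 2ℓx + ℓx²) / D³`. Hence `4 H(F_ℓ x) = F_ℓ'(x)² H(x)`.
Multiplying this over a periodic orbit, the factors `H(x_n)` and `H(F_ℓ x_n)` are the same numbers
in a different order and cancel, leaving `λ² = 4^p`.
-/

open Finset

section PeriodicOrbit

variable {α : Type*} {f : α → α} {p : ℕ} {x : ℕ → α}

theorem prod_range_comp_eq_of_periodic_orbit {M : Type*} [CommMonoid M] (g : α → M)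
    (horb : ∀ n, n + 1 < p → f (x n) = x (n + 1)) (hper : f (x (p - 1)) = x 0) :
    ∏ n ∈ range p, g (f (x n)) = ∏ n ∈ range p, g (x n) := by
  cases p with
  | zero => simp
  | succ q =>
    rw [Nat.add_sub_cancel] at hper
    rw [prod_range_succ, prod_range_succ', hper]
    congr 1
    exact prod_congr rfl fun n hn => by rw [horb n (by simpa using hn)]

theorem sq_prod_eq_pow_of_periodic_orbit {K : Type*} [CommRing K] [IsDomain K] (D H : α → K)
    (c : K) (horb : ∀ n, n + 1 < p → f (x n) = x (n + 1)) (hper : f (x (p - 1)) = x 0)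
    (hD : ∀ n < p, D (x n) ^ 2 * H (x n) = c * H (f (x n)))
    (hH : ∀ n < p, H (x n) ≠ 0) :
    (∏ n ∈ range p, D (x n)) ^ 2 = c ^ p := by
  have hprod : ∏ n ∈ range p, H (x n) ≠ 0 :=
    prod_ne_zero_iff.mpr fun n hn => hH n (mem_range.mp hn)
  refine mul_right_cancel₀ hprod ?_
  calc (∏ n ∈ range p, D (x n)) ^ 2 * ∏ n ∈ range p, H (x n)
      = ∏ n ∈ range p, c * H (f (x n)) := by
        rw [← prod_pow, ← prod_mul_distrib]
        exact prod_congr rfl fun n hn => hD n (mem_range.mp hn)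
    _ = c ^ p * ∏ n ∈ range p, H (x n) := by
        rw [prod_mul_distrib, prod_const, card_range,
          prod_range_comp_eq_of_periodic_orbit H horb hper]

end PeriodicOrbit

namespace KatsuraFukuda

noncomputable def map (ℓ x : ℝ) : ℝ := 4 * x * (1 - x) * (1 - ℓ * x) / (1 - ℓ * x ^ 2) ^ 2

def H (ℓ x : ℝ) : ℝ := x * (1 - x) * (1 - ℓ * x)

variable {ℓ x : ℝ}

theorem one_sub_map (hx : 1 - ℓ * x ^ 2 ≠ 0) :
    1 - map ℓ x = (1 - 2 * x + ℓ * x ^ 2) ^ 2 / (1 - ℓ * x ^ 2) ^ 2 := by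
  rw [eq_div_iff (pow_ne_zero 2 hx), sub_mul, map, div_mul_cancel₀ _ (pow_ne_zero 2 hx)]
  ring

theorem one_sub_mul_map (hx : 1 - ℓ * x ^ 2 ≠ 0) :
    1 - ℓ * map ℓ x = (1 - 2 * ℓ * x + ℓ * x ^ 2) ^ 2 / (1 - ℓ * x ^ 2) ^ 2 := by
  rw [eq_div_iff (pow_ne_zero 2 hx), sub_mul, map, mul_assoc,
    div_mul_cancel₀ _ (pow_ne_zero 2 hx)]
  ring

theorem hasDerivAt_map (hx : 1 - ℓ * x ^ 2 ≠ 0) :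
    HasDerivAt (map ℓ)
      (4 * (1 - 2 * x + ℓ * x ^ 2) * (1 - 2 * ℓ * x + ℓ * x ^ 2) / (1 - ℓ * x ^ 2) ^ 3) x := by
  have hnum : HasDerivAt (fun t : ℝ => 4 * t * (1 - t) * (1 - ℓ * t))
      ((4 * (1 - x) + 4 * x * (-1)) * (1 - ℓ * x) + 4 * x * (1 - x) * (-ℓ)) x := by
    have h4 : HasDerivAt (fun t : ℝ => 4 * t) 4 x := by
      simpa using (hasDerivAt_id x).const_mul (4 : ℝ)
    have h1 : HasDerivAt (fun t : ℝ => 1 - t) (-1) x := by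
      simpa using (hasDerivAt_id x).const_sub (1 : ℝ)
    have hℓ : HasDerivAt (fun t : ℝ => 1 - ℓ * t) (-ℓ) x := by
      simpa using ((hasDerivAt_id x).const_mul ℓ).const_sub (1 : ℝ)
    exact (h4.mul h1).mul hℓ
  have hden : HasDerivAt (fun t : ℝ => (1 - ℓ * t ^ 2) ^ 2)
      (2 * (1 - ℓ * x ^ 2) * (-(ℓ * (2 * x)))) x := by
    simpa using (((hasDerivAt_pow 2 x).const_mul ℓ).const_sub (1 : ℝ)).fun_pow 2
  refine (hnum.div hden (pow_ne_zero 2 hx)).congr_deriv ?_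
  field_simp
  ring

theorem deriv_map_sq_mul_H (hx : 1 - ℓ * x ^ 2 ≠ 0) :
    deriv (map ℓ) x ^ 2 * H ℓ x = 4 * H ℓ (map ℓ x) := by
  rw [(hasDerivAt_map hx).deriv, H, H, one_sub_map hx, one_sub_mul_map hx, map]
  field_simp

theorem one_sub_mul_sq_ne_zero (hℓ : ℓ ∈ Set.Ico (0 : ℝ) 1) (hx : x ∈ Set.Icc (0 : ℝ) 1) :
    1 - ℓ * x ^ 2 ≠ 0 := by
  have : ℓ * x ^ 2 ≤ ℓ := mul_le_of_le_one_right hℓ.1 (pow_le_one₀ hx.1 hx.2)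
  linarith [hℓ.2]

end KatsuraFukuda

theorem katsura_fukuda_multiplier_general (ℓ : ℝ) (hℓ : ℓ ∈ Set.Ico (0 : ℝ) 1)
    (F : ℝ → ℝ)
    (hF : F = fun x => 4 * x * (1 - x) * (1 - ℓ * x) / (1 - ℓ * x ^ 2) ^ 2)
    (p : ℕ) (x : ℕ → ℝ)
    (hxI : ∀ n < p, x n ∈ Set.Icc (0 : ℝ) 1)
    (horb : ∀ n, n + 1 < p → F (x n) = x (n + 1))
    (hper : F (x (p - 1)) = x 0)
    (hHne : ∀ n < p, x n * (1 - x n) * (1 - ℓ * x n) ≠ 0) :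
    (∏ n ∈ Finset.range p, deriv F (x n)) ^ 2 = 4 ^ p ∧
      |∏ n ∈ Finset.range p, deriv F (x n)| = 2 ^ p := by
  obtain rfl : F = KatsuraFukuda.map ℓ := hF
  have hsq : (∏ n ∈ range p, deriv (KatsuraFukuda.map ℓ) (x n)) ^ 2 = 4 ^ p :=
    sq_prod_eq_pow_of_periodic_orbit _ (KatsuraFukuda.H ℓ) 4 horb hper
      (fun n hn => KatsuraFukuda.deriv_map_sq_mul_H
        (KatsuraFukuda.one_sub_mul_sq_ne_zero hℓ (hxI n hn))) hHne
  refine ⟨hsq, ?_⟩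
  rw [← abs_of_pos (by positivity : (0 : ℝ) < 2 ^ p), ← sq_eq_sq_iff_abs_eq_abs, hsq, ← pow_mul,
    mul_comm, pow_mul]
  norm_num

/-- Every period-`p` orbit of the Katsura-Fukuda map `F_ℓ` in `[0,1]`, avoiding
the zeros of `x(1-x)(1-ℓx)`, has multiplier `λ` with `λ² = 4^p`, i.e.
`|λ| = 2^p`. The orbit is indexed as `x 0, …, x (p-1)`. -/
theorem katsura_fukuda_multiplier (ℓ : ℝ) (hℓ : ℓ ∈ Set.Ico (0 : ℝ) 1)
    (F : ℝ → ℝ)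
    (hF : F = fun x => 4 * x * (1 - x) * (1 - ℓ * x) / (1 - ℓ * x ^ 2) ^ 2)
    (p : ℕ) (hp : 1 ≤ p) (x : ℕ → ℝ)
    (hxI : ∀ n < p, x n ∈ Set.Icc (0 : ℝ) 1)
    (horb : ∀ n, n + 1 < p → F (x n) = x (n + 1))
    (hper : F (x (p - 1)) = x 0)
    (hHne : ∀ n < p, x n * (1 - x n) * (1 - ℓ * x n) ≠ 0) :
    (∏ n ∈ Finset.range p, deriv F (x n)) ^ 2 = 4 ^ p ∧
      |∏ n ∈ Finset.range p, deriv F (x n)| = 2 ^ p :=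
  katsura_fukuda_multiplier_general ℓ hℓ F hF p x hxI horb hper hHne
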